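/- arXiv:2205.12904 — 3 statements merged into one kernel-verified Lean document; each statement's English description precedes it below -/
import Mathlib

section
/- Let σ be a decision function, let w₁,…,w_D be i.i.d. standard Gaussian random vectors on ℝ^F, and let π be an independent standard Gaussian scalar. For the soft rule set f(x) = π·∏_{n=1}^D σ(wₙᵀx), for every t ∈ {1,…,D} and all x_i, x_j ∈ ℝ^F, E[ ⟨∇_{w_t} f(x_i), ∇_{w_t} f(x_j)⟩ ] = Σ(x_i,x_j)·T(x_i,x_j)^{D−1}·Ṫ(x_i,x_j), where ∇_{w_t} f(x) = x·σ̇(w_tᵀx)·π·∏_{n≠t} σ(wₙᵀx). -/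
open MeasureTheory ProbabilityTheory Filter

noncomputable section

/-- Euclidean inner product on `ℝ^F`. -/
def dot {F : ℕ} (u x : Fin F → ℝ) : ℝ := ∑ k, u k * x k

/-- Standard Gaussian measure on `ℝ^F` (zero mean, identity covariance). -/
def stdGauss (F : ℕ) : Measure (Fin F → ℝ) := Measure.pi fun _ => gaussianReal 0 1

/-- `T(x_i,x_j) = E[σ(uᵀx_i)·σ(uᵀx_j)]` for `u` standard Gaussian. -/
def Tker {F : ℕ} (σ : ℝ → ℝ) (xi xj : Fin F → ℝ) : ℝ :=
  ∫ u, σ (dot u xi) * σ (dot u xj) ∂ stdGauss F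

/-- `Ṫ(x_i,x_j) = E[σ̇(uᵀx_i)·σ̇(uᵀx_j)]` for `u` standard Gaussian. -/
def Tdot {F : ℕ} (σ : ℝ → ℝ) (xi xj : Fin F → ℝ) : ℝ :=
  ∫ u, deriv σ (dot u xi) * deriv σ (dot u xj) ∂ stdGauss F

/-- A decision function: differentiable with bounded derivative, values in [0,1],
and `σ(p) + σ(−p) = 1`. -/
structure IsDecisionFunc (σ : ℝ → ℝ) : Prop where
  differentiable : Differentiable ℝ σ
  deriv_bounded : ∃ C : ℝ, ∀ p : ℝ, |deriv σ p| ≤ C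
  mem_Icc : ∀ p : ℝ, σ p ∈ Set.Icc (0:ℝ) 1
  symm : ∀ p : ℝ, σ p + σ (-p) = 1

/-- The distribution of the parameters `(w₁,…,w_D, π)` of a soft rule set: the `w`'s are
i.i.d. standard Gaussian vectors on `ℝ^F` and `π` is an independent standard Gaussian. -/
def ruleParamMeasure (D F : ℕ) : Measure ((Fin D → Fin F → ℝ) × ℝ) :=
  (Measure.pi fun _ : Fin D => stdGauss F).prod (gaussianReal 0 1)

/-- The gradient of `f(x) = π·∏_{n=1}^D σ(wₙᵀx)` with respect to `w_t`:
`∇_{w_t} f(x) = x·σ̇(w_tᵀx)·π·∏_{n≠t} σ(wₙᵀx)`. -/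
def ruleGrad {D F : ℕ} (σ : ℝ → ℝ) (w : Fin D → Fin F → ℝ) (π : ℝ) (t : Fin D)
    (x : Fin F → ℝ) : Fin F → ℝ :=
  fun k => x k * deriv σ (dot (w t) x) * π * ∏ n ∈ Finset.univ.erase t, σ (dot (w n) x)

/-!
The integrand factors as `Σ(xᵢ,xⱼ) · π² · g(w_t) · ∏_{n≠t} f(wₙ)` with `g = σ̇(·ᵀxᵢ)σ̇(·ᵀxⱼ)` and
`f = σ(·ᵀxᵢ)σ(·ᵀxⱼ)`, so independence gives `E[π²] · E[g] · E[f]^{D-1} = Ṫ · T^{D-1}`.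
Fubini for such products of Bochner integrals needs no integrability: when a factor is not
integrable both sides are `0`.
-/

lemma integral_sq_gaussianReal (μ : ℝ) (v : NNReal) :
    ∫ x, x ^ 2 ∂gaussianReal μ v = μ ^ 2 + v := by
  have h := variance_eq_sub (memLp_id_gaussianReal (μ := μ) (v := v) 2)
  simp only [variance_id_gaussianReal, Pi.pow_apply, id_eq, integral_id_gaussianReal] at h
  linarith

theorem integral_mul_prod_erase_pi {ι E 𝕜 : Type*} [Fintype ι] [DecidableEq ι] [RCLike 𝕜]
    [MeasurableSpace E] (μ : Measure E) [SigmaFinite μ] (t : ι) (g f : E → 𝕜) :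
    ∫ x, g (x t) * ∏ i ∈ Finset.univ.erase t, f (x i) ∂Measure.pi (fun _ ↦ μ)
      = (∫ y, g y ∂μ) * (∫ y, f y ∂μ) ^ (Fintype.card ι - 1) := by
  let h : ι → E → 𝕜 := fun i ↦ if i = t then g else f
  have hh : ∀ i ∈ Finset.univ.erase t, h i = f := fun i hi ↦ if_neg (Finset.ne_of_mem_erase hi)
  calc ∫ x, g (x t) * ∏ i ∈ Finset.univ.erase t, f (x i) ∂Measure.pi (fun _ ↦ μ)
      = ∫ x, ∏ i, h i (x i) ∂Measure.pi (fun _ ↦ μ) := by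
        congr 1 with x
        rw [← Finset.mul_prod_erase _ _ (Finset.mem_univ t),
          Finset.prod_congr rfl fun i hi ↦ congrFun (hh i hi) (x i)]
        simp [h]
    _ = ∏ i, ∫ y, h i y ∂μ := integral_fintype_prod_eq_prod h
    _ = (∫ y, g y ∂μ) * (∫ y, f y ∂μ) ^ (Fintype.card ι - 1) := by
        rw [← Finset.mul_prod_erase _ _ (Finset.mem_univ t),
          Finset.prod_congr rfl fun i hi ↦ by rw [hh i hi], Finset.prod_const,
          Finset.card_erase_of_mem (Finset.mem_univ t), Finset.card_univ]
        simp [h]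

instance (F : ℕ) : IsProbabilityMeasure (stdGauss F) := by
  unfold stdGauss; infer_instance

lemma dot_ruleGrad {D F : ℕ} (σ : ℝ → ℝ) (w : Fin D → Fin F → ℝ) (π : ℝ) (t : Fin D)
    (xi xj : Fin F → ℝ) :
    dot (ruleGrad σ w π t xi) (ruleGrad σ w π t xj)
      = dot xi xj * (deriv σ (dot (w t) xi) * deriv σ (dot (w t) xj)
          * ∏ n ∈ Finset.univ.erase t, σ (dot (w n) xi) * σ (dot (w n) xj)) * π ^ 2 := by
  simp only [dot, ruleGrad, Finset.prod_mul_distrib, Finset.sum_mul]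
  exact Finset.sum_congr rfl fun k _ ↦ by ring

lemma integral_ruleParamMeasure {D F : ℕ} (t : Fin D) (c : ℝ) (g f : (Fin F → ℝ) → ℝ) :
    ∫ p, c * (g (p.1 t) * ∏ n ∈ Finset.univ.erase t, f (p.1 n)) * p.2 ^ 2 ∂ruleParamMeasure D F
      = c * (∫ v, g v ∂stdGauss F) * (∫ v, f v ∂stdGauss F) ^ (D - 1) := by
  rw [ruleParamMeasure, integral_prod_mul
      (fun w : Fin D → Fin F → ℝ ↦ c * (g (w t) * ∏ n ∈ Finset.univ.erase t, f (w n))) (· ^ 2),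
    integral_const_mul, integral_mul_prod_erase_pi, integral_sq_gaussianReal, Fintype.card_fin]
  simp only [NNReal.coe_one]
  ring

theorem stmt4_general (F D : ℕ) (σ : ℝ → ℝ) (t : Fin D)
    (xi xj : Fin F → ℝ) :
    ∫ p : (Fin D → Fin F → ℝ) × ℝ,
        dot (ruleGrad σ p.1 p.2 t xi) (ruleGrad σ p.1 p.2 t xj) ∂ ruleParamMeasure D F
      = dot xi xj * (Tker σ xi xj)^(D-1) * Tdot σ xi xj := by
  simp_rw [dot_ruleGrad]
  rw [integral_ruleParamMeasure t (dot xi xj) (fun v ↦ deriv σ (dot v xi) * deriv σ (dot v xj))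
    (fun v ↦ σ (dot v xi) * σ (dot v xj))]
  rw [Tker, Tdot]
  ring

/-- For the soft rule set `f(x) = π·∏ₙ σ(wₙᵀx)` with i.i.d. standard Gaussian parameters,
`E[⟨∇_{w_t} f(x_i), ∇_{w_t} f(x_j)⟩] = Σ(x_i,x_j)·T(x_i,x_j)^{D−1}·Ṫ(x_i,x_j)`. -/
theorem stmt4 (F D : ℕ) (σ : ℝ → ℝ) (hσ : IsDecisionFunc σ) (t : Fin D)
    (xi xj : Fin F → ℝ) :
    ∫ p : (Fin D → Fin F → ℝ) × ℝ,
        dot (ruleGrad σ p.1 p.2 t xi) (ruleGrad σ p.1 p.2 t xj) ∂ ruleParamMeasure D F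
      = dot xi xj * (Tker σ xi xj)^(D-1) * Tdot σ xi xj :=
  stmt4_general F D σ t xi xj
end
end

section
/- Let σ be the scaled error function with scaling factor α > 0 and x_i, x_j ∈ ℝ^F (so that 0 < T(x_i,x_j) < 1/2). Then the limiting decision-list NTK converges as the depth D tends to infinity: lim_{D→∞} Θ^{(D,DL)}(x_i,x_j) = Σ(x_i,x_j)·Ṫ(x_i,x_j) / (1 − T(x_i,x_j))² + T(x_i,x_j) / (1 − T(x_i,x_j)), where Θ^{(D,DL)}(x_i,x_j) = Σ(x_i,x_j)·Ṫ(x_i,x_j)·( ∑_{d=1}^{D} d·T(x_i,x_j)^{d−1} + D·T(x_i,x_j)^{D−1} ) + ∑_{d=1}^{D} T(x_i,x_j)^d + T(x_i,x_j)^D. -/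
open MeasureTheory ProbabilityTheory Filter

noncomputable section

/-- The scaled error function with scaling factor `α`:
`σ(p) = (1/√π)·∫₀^{αp} e^{−t²} dt + 1/2`. -/
def erfScaled (α : ℝ) (p : ℝ) : ℝ :=
  (1 / Real.sqrt Real.pi) * (∫ t in (0:ℝ)..(α * p), Real.exp (-(t^2))) + 1/2

/-- The limiting decision-list NTK of depth `D`:
`Θ^{(D,DL)} = Σ·Ṫ·(∑_{d=1}^D d·T^{d−1} + D·T^{D−1}) + ∑_{d=1}^D T^d + T^D`. -/
def thetaDL {F : ℕ} (σ : ℝ → ℝ) (D : ℕ) (xi xj : Fin F → ℝ) : ℝ :=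
  dot xi xj * Tdot σ xi xj *
      ((∑ d ∈ Finset.Icc 1 D, (d : ℝ) * (Tker σ xi xj)^(d-1))
        + (D : ℝ) * (Tker σ xi xj)^(D-1))
    + (∑ d ∈ Finset.Icc 1 D, (Tker σ xi xj)^d) + (Tker σ xi xj)^D

/-!
`Θ^{(D,DL)}` is built from the partial sums of `∑ T^d` and `∑ d T^{d-1}` and the terms
`D T^{D-1}`, `T^D`, so it converges to the stated limit as soon as `|T| < 1`. Since `σ` takes
values in `(0, 1)`, `T` is the mean of a function with values in `(0, 1)` and lies in `[0, 1)`;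
for the scaled error function this comes down to `|∫₀^x e^{-t²} dt| < √π / 2`.
-/

open Real

section Series

open Finset

variable {𝕜 : Type*} [NormedField 𝕜] {T : 𝕜}

theorem HasSum.tendsto_sum_Icc_one {M : Type*} [AddCommMonoid M] [TopologicalSpace M]
    {f : ℕ → M} {a : M} (h : HasSum (fun n ↦ f (n + 1)) a) :
    Tendsto (fun D ↦ ∑ d ∈ Icc 1 D, f d) atTop (nhds a) := by
  convert h.tendsto_sum_nat using 2 with D
  rw [range_eq_Ico, sum_Ico_add' f 0 D 1, Nat.zero_add, Ico_add_one_right_eq_Icc]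

theorem hasSum_succ_mul_geometric (hT : ‖T‖ < 1) :
    HasSum (fun n : ℕ ↦ ((n : 𝕜) + 1) * T ^ n) (1 / (1 - T) ^ 2) := by
  simpa [Ring.inverse_eq_inv', add_comm] using hasSum_choose_mul_geometric_of_norm_lt_one' 1 hT

theorem tendsto_sum_Icc_mul_pow_pred (hT : ‖T‖ < 1) :
    Tendsto (fun D : ℕ ↦ ∑ d ∈ Icc 1 D, (d : 𝕜) * T ^ (d - 1)) atTop (nhds (1 / (1 - T) ^ 2)) :=
  HasSum.tendsto_sum_Icc_one (by simpa using hasSum_succ_mul_geometric hT)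

theorem tendsto_sum_Icc_pow (hT : ‖T‖ < 1) :
    Tendsto (fun D : ℕ ↦ ∑ d ∈ Icc 1 D, T ^ d) atTop (nhds (T / (1 - T))) :=
  HasSum.tendsto_sum_Icc_one (by
    simpa [pow_succ', div_eq_mul_inv] using (hasSum_geometric_of_norm_lt_one hT).mul_left T)

theorem tendsto_mul_pow_pred (hT : ‖T‖ < 1) :
    Tendsto (fun D : ℕ ↦ (D : 𝕜) * T ^ (D - 1)) atTop (nhds 0) := by
  rw [← tendsto_add_atTop_iff_nat 1]
  simpa using (hasSum_succ_mul_geometric hT).summable.tendsto_atTop_zero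

end Series

open Set

theorem intervalIntegral_lt_integral_Ioi {f : ℝ → ℝ} (hf : Integrable f) (hpos : ∀ t, 0 < f t)
    (a x : ℝ) : ∫ t in a..x, f t < ∫ t in Ioi a, f t := by
  have hmono : StrictMono fun x ↦ ∫ t in a..x, f t := fun x y hxy ↦ by
    rw [← sub_pos, intervalIntegral.integral_interval_sub_left hf.intervalIntegrable
      hf.intervalIntegrable]
    exact intervalIntegral.intervalIntegral_pos_of_pos hf.intervalIntegrable hpos hxy
  have hlim := intervalIntegral_tendsto_integral_Ioi a hf.integrableOn tendsto_id
  exact (hmono (lt_add_one x)).trans_le (hmono.monotone.ge_of_tendsto hlim (x + 1))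

theorem abs_integral_exp_neg_sq_lt (x : ℝ) :
    |∫ t in (0 : ℝ)..x, Real.exp (-t ^ 2)| < √π / 2 := by
  have hhalf : ∫ t in Ioi (0 : ℝ), Real.exp (-t ^ 2) = √π / 2 := by
    simpa using integral_gaussian_Ioi 1
  have hlt (y : ℝ) : ∫ t in (0 : ℝ)..y, Real.exp (-t ^ 2) < √π / 2 :=
    hhalf ▸ intervalIntegral_lt_integral_Ioi (by simpa using integrable_exp_neg_mul_sq one_pos)
      (fun t ↦ Real.exp_pos _) 0 y
  have hodd : ∫ t in (0 : ℝ)..(-x), Real.exp (-t ^ 2) = -∫ t in (0 : ℝ)..x, Real.exp (-t ^ 2) := by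
    have h := intervalIntegral.integral_comp_neg (a := 0) (b := x) fun t ↦ Real.exp (-t ^ 2)
    simp only [neg_sq, neg_zero] at h
    rw [intervalIntegral.integral_symm, h]
  rw [abs_lt]
  exact ⟨by linarith [hlt (-x)], hlt x⟩

theorem erfScaled_mem_Ioo (α p : ℝ) : erfScaled α p ∈ Ioo 0 1 := by
  obtain ⟨hlo, hhi⟩ := abs_lt.1 (abs_integral_exp_neg_sq_lt (α * p))
  have hπ : 0 < √π := Real.sqrt_pos.2 Real.pi_pos
  have h : erfScaled α p = ((∫ t in (0 : ℝ)..α * p, Real.exp (-t ^ 2)) + √π / 2) / √π := by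
    rw [erfScaled]
    field_simp
  rw [h, mem_Ioo, div_lt_one hπ]
  exact ⟨div_pos (by linarith) hπ, by linarith⟩

theorem continuous_erfScaled (α : ℝ) : Continuous (erfScaled α) := by
  unfold erfScaled
  fun_prop

theorem continuous_dot_left {F : ℕ} (x : Fin F → ℝ) : Continuous fun u : Fin F → ℝ ↦ dot u x := by
  unfold dot
  fun_prop

theorem integral_lt_of_forall_lt {α : Type*} [MeasurableSpace α] {μ : Measure α}
    [IsProbabilityMeasure μ] {f : α → ℝ} (hf : Integrable f μ) {c : ℝ} (h : ∀ x, f x < c) :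
    ∫ x, f x ∂μ < c := by
  obtain ⟨x, hx⟩ := nonempty_of_measure_ne_zero (measure_integral_le_pos hf).ne'
  exact hx.trans_lt (h x)

instance inst_s12 (F : ℕ) : IsProbabilityMeasure (stdGauss F) := by
  unfold stdGauss
  infer_instance

theorem Tker_mem_Ico {F : ℕ} {σ : ℝ → ℝ} (hσ : Measurable σ) (hσ01 : ∀ p, σ p ∈ Ioo 0 1)
    (xi xj : Fin F → ℝ) : Tker σ xi xj ∈ Ico 0 1 := by
  have hmem (u : Fin F → ℝ) : σ (dot u xi) * σ (dot u xj) ∈ Ioo 0 1 := by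
    obtain ⟨⟨hi0, hi1⟩, ⟨hj0, hj1⟩⟩ := And.intro (hσ01 (dot u xi)) (hσ01 (dot u xj))
    exact ⟨mul_pos hi0 hj0, mul_lt_one_of_nonneg_of_lt_one_left hi0.le hi1 hj1.le⟩
  have hmeas : Measurable fun u : Fin F → ℝ ↦ σ (dot u xi) * σ (dot u xj) :=
    (hσ.comp (continuous_dot_left xi).measurable).mul (hσ.comp (continuous_dot_left xj).measurable)
  have hint : Integrable (fun u ↦ σ (dot u xi) * σ (dot u xj)) (stdGauss F) :=
    .of_bound hmeas.aestronglyMeasurable 1 (.of_forall fun u ↦ by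
      rw [Real.norm_of_nonneg (hmem u).1.le]; exact (hmem u).2.le)
  exact ⟨integral_nonneg fun u ↦ (hmem u).1.le, integral_lt_of_forall_lt hint fun u ↦ (hmem u).2⟩

theorem tendsto_thetaDL {F : ℕ} (σ : ℝ → ℝ) (xi xj : Fin F → ℝ) (hT : |Tker σ xi xj| < 1) :
    Tendsto (fun D : ℕ ↦ thetaDL σ D xi xj) atTop
      (nhds (dot xi xj * Tdot σ xi xj / (1 - Tker σ xi xj) ^ 2
        + Tker σ xi xj / (1 - Tker σ xi xj))) := by
  have h := (((tendsto_sum_Icc_mul_pow_pred hT).add (tendsto_mul_pow_pred hT)).const_mul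
    (dot xi xj * Tdot σ xi xj)).add (tendsto_sum_Icc_pow hT)
    |>.add (tendsto_pow_atTop_nhds_zero_of_norm_lt_one hT)
  simpa [thetaDL, div_eq_mul_inv] using h

theorem stmt12_general (F : ℕ) (α : ℝ) (xi xj : Fin F → ℝ) :
    Tendsto (fun D : ℕ => thetaDL (erfScaled α) D xi xj) atTop
      (nhds (dot xi xj * Tdot (erfScaled α) xi xj / (1 - Tker (erfScaled α) xi xj)^2
        + Tker (erfScaled α) xi xj / (1 - Tker (erfScaled α) xi xj))) := by
  obtain ⟨hT0, hT1⟩ :=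
    Tker_mem_Ico (continuous_erfScaled α).measurable (erfScaled_mem_Ioo α) xi xj
  exact tendsto_thetaDL _ xi xj (by rwa [abs_of_nonneg hT0])

/-- For the scaled error function with `α > 0`, the limiting decision-list NTK converges,
as the depth `D → ∞`, to `Σ·Ṫ/(1−T)² + T/(1−T)`. -/
theorem stmt12 (F : ℕ) (α : ℝ) (hα : 0 < α) (xi xj : Fin F → ℝ) :
    Tendsto (fun D : ℕ => thetaDL (erfScaled α) D xi xj) atTop
      (nhds (dot xi xj * Tdot (erfScaled α) xi xj / (1 - Tker (erfScaled α) xi xj)^2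
        + Tker (erfScaled α) xi xj / (1 - Tker (erfScaled α) xi xj))) :=
  stmt12_general F α xi xj

end
end

section
/- Let σ: ℝ → ℝ be measurable with 0 < σ(p) < 1 and σ(p) + σ(−p) = 1 for all p ∈ ℝ, and let u be a standard Gaussian random vector on ℝ^F. Then for all x_i, x_j ∈ ℝ^F, 0 < E[σ(uᵀx_i)·σ(uᵀx_j)] < 1/2. -/
/-!
Write `a = σ(uᵀxᵢ)`, `b = σ(uᵀxⱼ)`. The integrand is positive, hence so is its mean. Since `u` and
`-u` have the same law and `σ(-p) = 1 - σ(p)`, twice the mean is the mean of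
`ab + (1 - a)(1 - b) = 1 - a(1 - b) - b(1 - a)`, which is pointwise `< 1`.
-/

open MeasureTheory ProbabilityTheory Filter

noncomputable section

instance gaussianReal_zero_isNegInvariant (v : NNReal) : (gaussianReal 0 v).IsNegInvariant :=
  ⟨by rw [Measure.neg, gaussianReal_map_neg, neg_zero]⟩

instance stdGauss_isNegInvariant (F : ℕ) : (stdGauss F).IsNegInvariant := by
  unfold stdGauss; infer_instance

instance stdGauss_isProbabilityMeasure (F : ℕ) : IsProbabilityMeasure (stdGauss F) := by
  unfold stdGauss; infer_instance

lemma measurable_dot_left {F : ℕ} (x : Fin F → ℝ) : Measurable fun u : Fin F → ℝ => dot u x := by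
  unfold dot; fun_prop

lemma dot_neg_left {F : ℕ} (u x : Fin F → ℝ) : dot (-u) x = -dot u x := by
  simp [dot, neg_mul, Finset.sum_neg_distrib]

lemma mul_add_one_sub_mul_one_sub_lt_one {a b : ℝ} (ha₀ : 0 < a) (ha₁ : a < 1) (hb₀ : 0 < b)
    (hb₁ : b < 1) : a * b + (1 - a) * (1 - b) < 1 := by
  nlinarith [mul_pos ha₀ (sub_pos.2 hb₁), mul_pos hb₀ (sub_pos.2 ha₁)]

namespace MeasureTheory

variable {α : Type*} [MeasurableSpace α] {μ : Measure α} {f : α → ℝ}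

lemma integral_pos_of_forall_pos [NeZero μ] (hf : Integrable f μ) (hpos : ∀ x, 0 < f x) :
    0 < ∫ x, f x ∂μ := by
  rw [integral_pos_iff_support_of_nonneg (fun x => (hpos x).le) hf,
    Function.support_eq_univ fun x => (hpos x).ne']
  exact Measure.measure_univ_pos.2 (NeZero.ne μ)

lemma integral_lt_of_add_comp_neg_lt [AddGroup α] [MeasurableNeg α] [IsProbabilityMeasure μ]
    [μ.IsNegInvariant] (hf : Integrable f μ) {c : ℝ} (hlt : ∀ x, f x + f (-x) < 2 * c) :
    ∫ x, f x ∂μ < c := by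
  have hsym : Integrable (fun x => f x + f (-x)) μ := hf.add hf.comp_neg
  have hgap : 0 < ∫ x, (2 * c - (f x + f (-x))) ∂μ :=
    integral_pos_of_forall_pos ((integrable_const _).sub hsym) fun x => sub_pos.2 (hlt x)
  rw [integral_sub (integrable_const _) hsym, integral_add hf hf.comp_neg, integral_neg_eq_self,
    integral_const, probReal_univ, one_smul] at hgap
  linarith

end MeasureTheory

/-- If `σ` is measurable with `0 < σ(p) < 1` and `σ(p) + σ(−p) = 1` for all `p`, and `u`
is a standard Gaussian vector on `ℝ^F`, then `0 < E[σ(uᵀx_i)·σ(uᵀx_j)] < 1/2`. -/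
theorem stmt13 (F : ℕ) (σ : ℝ → ℝ) (hmeas : Measurable σ)
    (hrange : ∀ p : ℝ, 0 < σ p ∧ σ p < 1) (hsymm : ∀ p : ℝ, σ p + σ (-p) = 1)
    (xi xj : Fin F → ℝ) :
    0 < ∫ u, σ (dot u xi) * σ (dot u xj) ∂ stdGauss F ∧
    ∫ u, σ (dot u xi) * σ (dot u xj) ∂ stdGauss F < 1/2 := by
  have hint : Integrable (fun u => σ (dot u xi) * σ (dot u xj)) (stdGauss F) := by
    refine .of_bound ((hmeas.comp (measurable_dot_left xi)).mul
      (hmeas.comp (measurable_dot_left xj))).aestronglyMeasurable 1 (ae_of_all _ fun u => ?_)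
    rw [norm_mul, Real.norm_of_nonneg (hrange _).1.le, Real.norm_of_nonneg (hrange _).1.le]
    exact mul_le_one₀ (hrange _).2.le (hrange _).1.le (hrange _).2.le
  refine ⟨integral_pos_of_forall_pos hint fun u => mul_pos (hrange _).1 (hrange _).1,
    integral_lt_of_add_comp_neg_lt hint fun u => ?_⟩
  have hflip : ∀ p, σ (-p) = 1 - σ p := fun p => eq_sub_of_add_eq' (hsymm p)
  rw [dot_neg_left, dot_neg_left, hflip, hflip, mul_one_div_cancel two_ne_zero]
  exact mul_add_one_sub_mul_one_sub_lt_one (hrange _).1 (hrange _).2 (hrange _).1 (hrange _).2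

end
end
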